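/- Abstract inf-sup stability: let X, M be real Hilbert spaces with norms ‖·‖_X, ‖·‖_M, and let A(u,λ;v,μ) = a(u,v) + b(λ,v) + b(μ,u) - c(λ,μ), where a is coercive on X with constant α > 0 and bounded, b is bounded, c satisfies c(η,η) ≥ -ε‖η‖²_M with ε small, and the inf-sup condition holds: for every η ∈ M there exists v_η ∈ X with b(η, v_η) ≥ β‖η‖²_M and ‖v_η‖_X ≤ C‖η‖_M. Then there exist constants such that for every (y,η) there exists (v,μ) with ‖(v,μ)‖ ≤ C₁‖(y,η)‖ and A(y,η;v,μ) ≥ C₂(‖y‖²_X + ‖η‖²_M), provided ε < ε₀(α, β, C). -/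

import Mathlib

/-!
Test `(y, η)` against `(v, μ) = (y + δ • w, -η)`, where `w` is the inf-sup witness of `η`.
The terms `b η y` and `b (-η) y` cancel, `a y y` controls `‖y‖²`, `δ b η w` controls `δ β ‖η‖²`,
and for `δ ‖a‖² C² ≤ α β` Young's inequality absorbs the cross term `δ a y w` into half of each.
What remains of `δ β ‖η‖²` dominates the negative part `ε ‖η‖²` of `c η η` once `ε < δ β / 4`.
-/

/-- The saddle-point form `A(u, λ; v, μ)`. -/
noncomputable def saddleForm {X M : Type*} [NormedAddCommGroup X] [NormedSpace ℝ X]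
    [NormedAddCommGroup M] [NormedSpace ℝ M]
    (a : X →L[ℝ] X →L[ℝ] ℝ) (b : M →L[ℝ] X →L[ℝ] ℝ) (c : M →L[ℝ] M →L[ℝ] ℝ)
    (u : X) (lam : M) (v : X) (μ : M) : ℝ :=
  a u v + b lam v + b μ u - c lam μ

lemma mul_mul_mul_le_of_mul_sq_le {α β δ K s t : ℝ} (hα : 0 < α) (hδ : 0 ≤ δ)
    (hδK : δ * K ^ 2 ≤ α * β) :
    δ * (K * s * t) ≤ α / 2 * s ^ 2 + δ * β / 2 * t ^ 2 := by
  have hsq : 2 * α * (δ * K * s * t) ≤ α ^ 2 * s ^ 2 + δ * (δ * K ^ 2) * t ^ 2 := by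
    nlinarith [sq_nonneg (α * s - δ * K * t)]
  have hδK_t : δ * (δ * K ^ 2) * t ^ 2 ≤ δ * (α * β) * t ^ 2 := by gcongr
  nlinarith

lemma norm_add_smul_sq_add_sq_le {X : Type*} [NormedAddCommGroup X] [NormedSpace ℝ X]
    {C δ t : ℝ} {y w : X} (hw : ‖w‖ ≤ C * t) :
    ‖y + δ • w‖ ^ 2 + t ^ 2 ≤ 2 * (1 + (δ * C) ^ 2) * (‖y‖ ^ 2 + t ^ 2) := by
  have hw_sq : ‖w‖ ^ 2 ≤ (C * t) ^ 2 := pow_le_pow_left₀ (norm_nonneg w) hw 2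
  have hsum : ‖y + δ • w‖ ≤ ‖y‖ + |δ| * ‖w‖ := by
    simpa only [norm_smul, Real.norm_eq_abs] using norm_add_le y (δ • w)
  have hsum_sq : ‖y + δ • w‖ ^ 2 ≤ 2 * ‖y‖ ^ 2 + 2 * δ ^ 2 * ‖w‖ ^ 2 := by
    nlinarith [pow_le_pow_left₀ (norm_nonneg _) hsum 2, sq_nonneg (‖y‖ - |δ| * ‖w‖), sq_abs δ]
  nlinarith [mul_le_mul_of_nonneg_left hw_sq (sq_nonneg δ), sq_nonneg (δ * C * ‖y‖)]

section

variable {X M : Type*} [NormedAddCommGroup X] [NormedSpace ℝ X]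
  [NormedAddCommGroup M] [NormedSpace ℝ M]

lemma saddleForm_add_smul_neg (a : X →L[ℝ] X →L[ℝ] ℝ) (b : M →L[ℝ] X →L[ℝ] ℝ)
    (c : M →L[ℝ] M →L[ℝ] ℝ) (y w : X) (η : M) (δ : ℝ) :
    saddleForm a b c y η (y + δ • w) (-η) = a y y + δ * (a y w + b η w) + c η η := by
  simp only [saddleForm, map_add, map_smul, map_neg, smul_eq_mul, neg_apply]
  ring

lemma le_saddleForm_add_smul_neg {a : X →L[ℝ] X →L[ℝ] ℝ} {b : M →L[ℝ] X →L[ℝ] ℝ}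
    {c : M →L[ℝ] M →L[ℝ] ℝ} {α β C δ ε : ℝ} {y w : X} {η : M} (hα : 0 < α) (hδ : 0 ≤ δ)
    (hδa : δ * (‖a‖ * C) ^ 2 ≤ α * β) (hacoer : a y y ≥ α * ‖y‖ ^ 2)
    (hbw : b η w ≥ β * ‖η‖ ^ 2) (hw : ‖w‖ ≤ C * ‖η‖) (hc : c η η ≥ -ε * ‖η‖ ^ 2) :
    α / 2 * ‖y‖ ^ 2 + (δ * β / 2 - ε) * ‖η‖ ^ 2 ≤ saddleForm a b c y η (y + δ • w) (-η) := by
  have hayw : -(‖a‖ * C * ‖y‖ * ‖η‖) ≤ a y w := by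
    have hbound : |a y w| ≤ ‖a‖ * ‖y‖ * ‖w‖ := a.le_opNorm₂ y w
    have hw' : ‖a‖ * ‖y‖ * ‖w‖ ≤ ‖a‖ * ‖y‖ * (C * ‖η‖) := by gcongr
    linarith [neg_abs_le (a y w)]
  have hyoung := mul_mul_mul_le_of_mul_sq_le (s := ‖y‖) (t := ‖η‖) hα hδ hδa
  have hδ_cross : δ * (β * ‖η‖ ^ 2 - ‖a‖ * C * ‖y‖ * ‖η‖) ≤ δ * (a y w + b η w) := by
    gcongr; linarith
  rw [saddleForm_add_smul_neg]
  nlinarith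

end

theorem abstract_infsup_stability_general
    {X M : Type*}
    [NormedAddCommGroup X] [InnerProductSpace ℝ X]
    [NormedAddCommGroup M] [InnerProductSpace ℝ M]
    (a : X →L[ℝ] X →L[ℝ] ℝ) (b : M →L[ℝ] X →L[ℝ] ℝ) (c : M →L[ℝ] M →L[ℝ] ℝ)
    (α β C : ℝ) (hα : 0 < α) (hβ : 0 < β)
    (hacoer : ∀ y : X, a y y ≥ α * ‖y‖ ^ 2)
    (hinfsup : ∀ η : M, ∃ v : X, b η v ≥ β * ‖η‖ ^ 2 ∧ ‖v‖ ≤ C * ‖η‖) :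
    ∃ ε₀ C₁ C₂ : ℝ, 0 < ε₀ ∧ 0 < C₁ ∧ 0 < C₂ ∧
      ∀ ε : ℝ, 0 ≤ ε → ε < ε₀ →
        (∀ η : M, c η η ≥ -ε * ‖η‖ ^ 2) →
        ∀ (y : X) (η : M), ∃ (v : X) (μ : M),
          ‖v‖ ^ 2 + ‖μ‖ ^ 2 ≤ C₁ ^ 2 * (‖y‖ ^ 2 + ‖η‖ ^ 2) ∧
          a y v + b η v + b μ y - c η μ ≥ C₂ * (‖y‖ ^ 2 + ‖η‖ ^ 2) := by
  set δ := α * β / (1 + (‖a‖ * C) ^ 2)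
  have hδ : 0 < δ := by positivity
  have hδa : δ * (‖a‖ * C) ^ 2 ≤ α * β := by
    rw [div_mul_eq_mul_div, div_le_iff₀ (by positivity)]
    nlinarith [mul_pos hα hβ]
  refine ⟨δ * β / 4, √(2 * (1 + (δ * C) ^ 2)), min (α / 2) (δ * β / 4), by positivity,
    by positivity, by positivity, fun ε _ hε hc y η => ?_⟩
  obtain ⟨w, hbw, hw⟩ := hinfsup η
  refine ⟨y + δ • w, -η, ?_, ?_⟩
  · rw [norm_neg, Real.sq_sqrt (by positivity)]
    exact norm_add_smul_sq_add_sq_le hw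
  · have hA := le_saddleForm_add_smul_neg hα hδ.le hδa (hacoer y) hbw hw (hc η)
    have hmin_y := mul_le_mul_of_nonneg_right (min_le_left (α / 2) (δ * β / 4)) (sq_nonneg ‖y‖)
    have hmin_η := mul_le_mul_of_nonneg_right (min_le_right (α / 2) (δ * β / 4)) (sq_nonneg ‖η‖)
    have hε_η : ε * ‖η‖ ^ 2 ≤ δ * β / 4 * ‖η‖ ^ 2 := by gcongr
    unfold saddleForm at hA
    linarith

/-- Abstract inf-sup stability (Proposition 3.1): under coercivity of `a`,
boundedness of `a`, `b`, an inf-sup condition for `b`, and a small negative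
part of `c`, for every `(y,η)` there exists a test pair `(v,μ)` bounded by
`(y,η)` for which the form `A` is coercive. -/
theorem abstract_infsup_stability
    {X M : Type*}
    [NormedAddCommGroup X] [InnerProductSpace ℝ X] [CompleteSpace X]
    [NormedAddCommGroup M] [InnerProductSpace ℝ M] [CompleteSpace M]
    (a : X →L[ℝ] X →L[ℝ] ℝ) (b : M →L[ℝ] X →L[ℝ] ℝ) (c : M →L[ℝ] M →L[ℝ] ℝ)
    (α β Cb C : ℝ) (hα : 0 < α) (hβ : 0 < β) (hCb : 0 < Cb) (hC : 0 < C)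
    (hasymm : ∀ u v, a u v = a v u)
    (hacoer : ∀ y : X, a y y ≥ α * ‖y‖ ^ 2)
    (hbbdd : ∀ (η : M) (v : X), |b η v| ≤ Cb * ‖η‖ * ‖v‖)
    (hcsymm : ∀ lam μ, c lam μ = c μ lam)
    (hinfsup : ∀ η : M, ∃ v : X, b η v ≥ β * ‖η‖ ^ 2 ∧ ‖v‖ ≤ C * ‖η‖) :
    ∃ ε₀ C₁ C₂ : ℝ, 0 < ε₀ ∧ 0 < C₁ ∧ 0 < C₂ ∧
      ∀ ε : ℝ, 0 ≤ ε → ε < ε₀ →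
        (∀ η : M, c η η ≥ -ε * ‖η‖ ^ 2) →
        ∀ (y : X) (η : M), ∃ (v : X) (μ : M),
          ‖v‖ ^ 2 + ‖μ‖ ^ 2 ≤ C₁ ^ 2 * (‖y‖ ^ 2 + ‖η‖ ^ 2) ∧
          a y v + b η v + b μ y - c η μ ≥ C₂ * (‖y‖ ^ 2 + ‖η‖ ^ 2) :=
  abstract_infsup_stability_general a b c α β C hα hβ hacoer hinfsup
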